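/- arXiv:1205.0993 — 4 statements merged into one kernel-verified Lean document; each statement's English description precedes it below -/
import Mathlib

section
/- Let P and Q be orthogonal projection matrices in M_N(ℂ). If x ≠ 0 satisfies (P + Q)x = λx for some λ ∉ {0, 1}, then Px ≠ 0 and PQP(Px) = (λ − 1)²·Px; in particular, (λ − 1)² is an eigenvalue of PQP. -/
open Matrix

/-- If `P, Q` are orthogonal projection matrices in `M_N(ℂ)` and
`(P + Q) x = λ x` with `x ≠ 0` and `λ ∉ {0, 1}`, then `P x ≠ 0` and
`PQP (P x) = (λ - 1)² (P x)`; in particular `(λ - 1)²` is an eigenvalue of `PQP`. -/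
theorem PQP_eigenvalue_of_P_add_Q_eigenvalue
    (N : ℕ) (P Q : Matrix (Fin N) (Fin N) ℂ)
    (hP : P.IsHermitian) (hP2 : P * P = P)
    (hQ : Q.IsHermitian) (hQ2 : Q * Q = Q)
    (lam : ℂ) (hlam0 : lam ≠ 0) (hlam1 : lam ≠ 1)
    (x : Fin N → ℂ) (hx : x ≠ 0) (heig : (P + Q).mulVec x = lam • x) :
    P.mulVec x ≠ 0 ∧
    (P * Q * P).mulVec (P.mulVec x) = ((lam - 1) ^ 2) • P.mulVec x := by
  have hsum : P.mulVec x + Q.mulVec x = lam • x := by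
    rw [← Matrix.add_mulVec]; exact heig
  -- P applied to heig:
  have hPQ : (P * Q).mulVec x = (lam - 1) • P.mulVec x := by
    have h := congrArg (P.mulVec) heig
    rw [Matrix.mulVec_smul, Matrix.mulVec_mulVec, Matrix.mul_add, Matrix.add_mulVec, hP2] at h
    have : (P * Q).mulVec x = lam • P.mulVec x - P.mulVec x := by
      rw [← h]; abel
    rw [this, sub_smul, one_smul]
  -- Q applied to heig:
  have hQP : (Q * P).mulVec x = (lam - 1) • Q.mulVec x := by
    have h := congrArg (Q.mulVec) heig
    rw [Matrix.mulVec_smul, Matrix.mulVec_mulVec, Matrix.mul_add, Matrix.add_mulVec, hQ2] at h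
    have : (Q * P).mulVec x = lam • Q.mulVec x - Q.mulVec x := by
      rw [← h]; abel
    rw [this, sub_smul, one_smul]
  constructor
  · intro hPx
    have hQx : Q.mulVec x = lam • x := by
      rw [← hsum, hPx, zero_add]
    have h2 : Q.mulVec (Q.mulVec x) = Q.mulVec x := by
      rw [Matrix.mulVec_mulVec, hQ2]
    rw [hQx, Matrix.mulVec_smul, hQx, smul_smul] at h2
    have : (lam * lam - lam) • x = 0 := by
      rw [sub_smul, h2, sub_self]
    have hne : lam * lam - lam ≠ 0 := by
      intro h
      have : lam * (lam - 1) = 0 := by ring_nf; linear_combination h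
      rcases mul_eq_zero.mp this with h | h
      · exact hlam0 h
      · exact hlam1 (by linear_combination h)
    exact hx (by
      have := smul_eq_zero.mp this
      tauto)
  · have : (P * Q * P).mulVec (P.mulVec x) = (P * Q * P).mulVec x := by
      rw [Matrix.mulVec_mulVec, Matrix.mul_assoc (P*Q) P P, hP2]
    rw [this, Matrix.mul_assoc, ← Matrix.mulVec_mulVec, hQP, Matrix.mulVec_smul,
      Matrix.mulVec_mulVec, hPQ, smul_smul, ← sq]
end

section
/- Let P and Q be orthogonal projection matrices in M_N(ℂ). If λ is an eigenvalue of P + Q with λ ∉ {0, 1, 2}, then 2 − λ is also an eigenvalue of P + Q. (The eigenvalues of P + Q other than 0, 1, 2 come in pairs located symmetrically around 1.) -/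
open Matrix

/-- If `P, Q` are orthogonal projection matrices in `M_N(ℂ)` and
`λ ∉ {0, 1, 2}` is an eigenvalue of `P + Q`, then `2 - λ` is also an eigenvalue of
`P + Q`: the eigenvalues other than `0, 1, 2` come in pairs symmetric around `1`. -/
theorem eigenvalues_P_add_Q_symmetric_around_one
    (N : ℕ) (P Q : Matrix (Fin N) (Fin N) ℂ)
    (hP : P.IsHermitian) (hP2 : P * P = P)
    (hQ : Q.IsHermitian) (hQ2 : Q * Q = Q)
    (lam : ℂ) (hlam0 : lam ≠ 0) (hlam1 : lam ≠ 1) (hlam2 : lam ≠ 2)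
    (heig : ∃ x : Fin N → ℂ, x ≠ 0 ∧ (P + Q).mulVec x = lam • x) :
    ∃ y : Fin N → ℂ, y ≠ 0 ∧ (P + Q).mulVec y = (2 - lam) • y := by
  obtain ⟨x, hx, hAx⟩ := heig
  refine ⟨(P - Q).mulVec x, ?_, ?_⟩
  · intro h0
    have hPQ : P.mulVec x = Q.mulVec x := by
      have := h0
      rw [Matrix.sub_mulVec, sub_eq_zero] at this
      exact this
    have h2P : (2 : ℂ) • P.mulVec x = lam • x := by
      rw [← hAx, Matrix.add_mulVec, hPQ, two_smul]
    have hPx : P.mulVec x = (lam / 2) • x := by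
      have := congrArg (fun v => (2 : ℂ)⁻¹ • v) h2P
      simpa [smul_smul, div_eq_inv_mul, mul_comm] using this
    have hP2x : P.mulVec (P.mulVec x) = P.mulVec x := by
      rw [Matrix.mulVec_mulVec, hP2]
    rw [hPx, Matrix.mulVec_smul, hPx, smul_smul] at hP2x
    have : (lam / 2 * (lam / 2) - lam / 2) • x = 0 := by
      rw [sub_smul, hP2x, sub_self]
    have hc : lam / 2 * (lam / 2) - lam / 2 = 0 := by
      by_contra hc
      exact hx (by simpa [hc] using smul_eq_zero.mp this |>.resolve_left hc)
    have : lam * (lam - 2) = 0 := by ring_nf; ring_nf at hc; linear_combination 4 * hc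
    rcases mul_eq_zero.mp this with h | h
    · exact hlam0 h
    · exact hlam2 (sub_eq_zero.mp h)
  · have key : (P + Q) * (P - Q) = 2 • (P - Q) - (P - Q) * (P + Q) := by
      have : (P + Q) * (P - Q) + (P - Q) * (P + Q) = 2 • (P - Q) := by
        have expand : (P + Q) * (P - Q) + (P - Q) * (P + Q)
            = P * P - Q * Q + (P * P - Q * Q) := by noncomm_ring
        rw [expand, hP2, hQ2, ← two_smul ℂ]
        simp [two_smul]
      linear_combination (norm := noncomm_ring) this
    calc (P + Q).mulVec ((P - Q).mulVec x)
        = ((P + Q) * (P - Q)).mulVec x := by rw [Matrix.mulVec_mulVec]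
      _ = (2 • (P - Q) - (P - Q) * (P + Q)).mulVec x := by rw [key]
      _ = (2 : ℂ) • (P - Q).mulVec x - (P - Q).mulVec ((P + Q).mulVec x) := by
          simp [Matrix.sub_mulVec, Matrix.smul_mulVec, ← Matrix.mulVec_mulVec,
            two_smul, Matrix.add_mulVec]
      _ = (2 : ℂ) • (P - Q).mulVec x - lam • (P - Q).mulVec x := by
          rw [hAx, Matrix.mulVec_smul]
      _ = (2 - lam) • (P - Q).mulVec x := by rw [sub_smul]
end

section
/- Let P and Q be orthogonal projection matrices in M_N(ℂ) with rank(P) = p and rank(Q) = q, where p ≤ q and p + q ≤ N. Let θ > 0 be real. Assume the characteristic polynomial of PQP equals X^{N−p}·∏_{i=1}^{p}(X − tᵢ), where t₁, …, t_p are distinct numbers in the open interval (0,1). Then the characteristic polynomial of P + θQ equals X^{N−p−q}·(X − θ)^{q−p}·∏_{i=1}^{p}(X − λᵢ⁺)(X − λᵢ⁻), where λᵢ^± = (1 + θ ± √((1−θ)² + 4θtᵢ))/2. In particular, P + θQ has 2p distinct eigenvalues different from 0 and θ, the eigenvalue θ with multiplicity q − p, and the eigenvalue 0 with multiplicity N −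 p − q. -/
/-!
For `x ∉ {0, 1, θ}` the matrix `x - θQ` is invertible with inverse `x⁻¹(1 - Q) + (x - θ)⁻¹Q`.
Factoring it out and applying Sylvester's identity `det (1 - AB) = det (1 - BA)` reduces
`det (x - P - θQ)` to `det (1 - x⁻¹P) · det (1 - b PQP)` with `b = θ / ((x - 1)(x - θ))`, since `P`
fixes `PQP`. All three determinants are read off from characteristic polynomials, and each nonzero
eigenvalue `t` of `PQP` contributes the factor `(x - 1)(x - θ) - θt`, whose roots are `λ^±`.
As `(λ - 1)(λ - θ) = θt` recovers `t` from `λ`, the `λ^±` are pairwise distinct, and they avoid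
`0` and `θ`, where the left side is `θ` and `0`.
-/

open Matrix Polynomial

namespace Matrix

variable {n : Type*} [Fintype n] [DecidableEq n]

theorem IsHermitian.charpoly_of_isIdempotentElem {𝕜 : Type*} [RCLike 𝕜] {A : Matrix n n 𝕜}
    (hA : A.IsHermitian) (hA2 : IsIdempotentElem A) :
    A.charpoly = X ^ (Fintype.card n - A.rank) * (X - 1) ^ A.rank := by
  set zeros := Finset.univ.filter fun i => hA.eigenvalues i = 0
  set ones := Finset.univ.filter fun i => ¬hA.eigenvalues i = 0
  have h01 : ∀ i, hA.eigenvalues i = 0 ∨ hA.eigenvalues i = 1 := fun i => by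
    simpa using hA2.spectrum_subset ℝ (hA.eigenvalues_mem_spectrum_real i)
  have hrank : A.rank = ones.card := by
    rw [hA.rank_eq_card_non_zero_eigs, Fintype.card_subtype]
  have hcard : zeros.card = Fintype.card n - A.rank := by
    rw [hrank, ← Finset.card_univ, ← Finset.card_filter_add_card_filter_not (s := Finset.univ)
      (fun i => hA.eigenvalues i = 0), Nat.add_sub_cancel]
  have hzero : ∏ i ∈ zeros, (X - C (hA.eigenvalues i : 𝕜)) = X ^ zeros.card := by
    rw [← Finset.prod_const]
    exact Finset.prod_congr rfl fun i hi => by simp [(Finset.mem_filter.1 hi).2]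
  have hone : ∏ i ∈ ones, (X - C (hA.eigenvalues i : 𝕜)) = (X - 1) ^ ones.card := by
    rw [← Finset.prod_const]
    exact Finset.prod_congr rfl fun i hi => by
      simp [(h01 i).resolve_left (Finset.mem_filter.1 hi).2]
  rw [hA.charpoly_eq, ← Finset.prod_filter_mul_prod_filter_not Finset.univ
    (fun i => hA.eigenvalues i = 0), hzero, hone, hcard, hrank]

variable {K : Type*} [Field K]

theorem det_smul_one_sub_smul_of_charpoly_eq {ι : Type*} [Fintype ι] {A : Matrix n n K}
    {t : ι → K} (hA : A.charpoly = X ^ (Fintype.card n - Fintype.card ι) * ∏ i, (X - C (t i)))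
    (x c : K) :
    (x • 1 - c • A).det = x ^ (Fintype.card n - Fintype.card ι) * ∏ i, (x - c * t i) := by
  have hcard : Fintype.card ι ≤ Fintype.card n := by
    have := congrArg natDegree hA
    rw [charpoly_natDegree_eq_dim, natDegree_mul (pow_ne_zero _ X_ne_zero)
      (monic_prod_of_monic _ _ fun i _ => monic_X_sub_C (t i)).ne_zero, natDegree_pow,
      natDegree_X, natDegree_finsetProd_X_sub_C_eq_card, Finset.card_univ] at this
    omega
  rcases eq_or_ne c 0 with rfl | hc
  · simp [← pow_add, Nat.sub_add_cancel hcard]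
  · have hfactor : x • 1 - c • A = c • (scalar n (x / c) - A) := by
      rw [smul_sub, scalar_apply, ← smul_one_eq_diagonal, smul_smul, mul_div_cancel₀ _ hc]
    have hprod : ∏ i, (x - c * t i) = c ^ Fintype.card ι * ∏ i, (x / c - t i) := by
      rw [← Finset.card_univ, ← Finset.prod_const, ← Finset.prod_mul_distrib]
      exact Finset.prod_congr rfl fun i _ => by field_simp
    rw [hfactor, det_smul, ← eval_charpoly, hA, hprod, ← Nat.sub_add_cancel hcard]
    simp only [eval_mul, eval_pow, eval_X, eval_prod, eval_sub, eval_C]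
    rw [pow_add, Nat.add_sub_cancel, div_pow]
    field_simp

theorem det_smul_one_sub_add_smul_of_isIdempotentElem {P Q : Matrix n n K}
    (hP : IsIdempotentElem P) (hQ : IsIdempotentElem Q) {x θ : K}
    (hx : x ≠ 0) (hxθ : x ≠ θ) (hx1 : x ≠ 1) :
    (x • 1 - (P + θ • Q)).det =
      (x • 1 - θ • Q).det * (1 - x⁻¹ • P).det *
        (1 - (θ / ((x - 1) * (x - θ))) • (P * Q * P)).det := by
  have hxθ' : x - θ ≠ 0 := sub_ne_zero.2 hxθ
  have hx1' : x - 1 ≠ 0 := sub_ne_zero.2 hx1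
  set R := x⁻¹ • (1 - Q) + (x - θ)⁻¹ • Q
  have hR : (x • 1 - θ • Q) * R = 1 := by
    simp only [R, Matrix.mul_add, Matrix.sub_mul, Matrix.mul_sub, smul_mul_smul_comm,
      Matrix.one_mul, Matrix.mul_one, hQ.eq, sub_self, smul_zero]
    match_scalars <;> field_simp
    ring
  have hPRP :
      1 - P * (R * P) = (1 - x⁻¹ • P) * (1 - (θ / ((x - 1) * (x - θ))) • (P * Q * P)) := by
    simp only [R, Matrix.add_mul, Matrix.mul_add, Matrix.sub_mul, Matrix.mul_sub, smul_mul_assoc,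
      mul_smul_comm, Matrix.one_mul, Matrix.mul_one, ← Matrix.mul_assoc, hP.eq]
    match_scalars <;> field_simp
    ring
  calc (x • 1 - (P + θ • Q)).det = ((x • 1 - θ • Q) * (1 - R * P)).det := by
        rw [Matrix.mul_sub, Matrix.mul_one, ← Matrix.mul_assoc, hR, Matrix.one_mul]; abel_nf
    _ = (x • 1 - θ • Q).det * (1 - P * (R * P)).det := by
        rw [det_mul, ← det_one_sub_mul_comm (R * P) P, Matrix.mul_assoc R P P, hP.eq]
    _ = _ := by rw [hPRP, det_mul]; ring

theorem charpoly_add_smul_of_isIdempotentElem [Infinite K] {N p q : ℕ}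
    {P Q : Matrix (Fin N) (Fin N) K} (hP : IsIdempotentElem P) (hQ : IsIdempotentElem Q)
    (hPchar : P.charpoly = X ^ (N - p) * (X - 1) ^ p)
    (hQchar : Q.charpoly = X ^ (N - q) * (X - 1) ^ q)
    {t : Fin p → K} (hPQPchar : (P * Q * P).charpoly = X ^ (N - p) * ∏ i, (X - C (t i)))
    (hpq : p ≤ q) (hpqN : p + q ≤ N) (θ : K) :
    (P + θ • Q).charpoly =
      X ^ (N - p - q) * (X - C θ) ^ (q - p) * ∏ i, ((X - 1) * (X - C θ) - C (θ * t i)) := by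
  apply eq_of_infinite_eval_eq
  refine Set.Infinite.mono (s := ({0, 1, θ} : Set K)ᶜ) ?_ (Set.toFinite _).infinite_compl
  intro x hx
  simp only [Set.mem_compl_iff, Set.mem_insert_iff, Set.mem_singleton_iff, not_or] at hx
  obtain ⟨hx0, hx1, hxθ⟩ := hx
  have hdetQ : (x • 1 - θ • Q).det =
      x ^ (N - p - q) * (x - θ) ^ (q - p) * (x ^ p * (x - θ) ^ p) := by
    rw [det_smul_one_sub_smul_of_charpoly_eq (t := fun _ : Fin q => (1 : K))
      (by simpa using hQchar)]
    simp only [Fintype.card_fin, Fin.prod_const, mul_one]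
    rw [mul_mul_mul_comm, ← pow_add, ← pow_add, Nat.sub_add_cancel hpq,
      show N - p - q + p = N - q by omega]
  have hdetP : (1 - x⁻¹ • P).det = (1 - x⁻¹) ^ p := by
    simpa using det_smul_one_sub_smul_of_charpoly_eq (t := fun _ : Fin p => (1 : K))
      (by simpa using hPchar) 1 x⁻¹
  have hdetPQP : (1 - (θ / ((x - 1) * (x - θ))) • (P * Q * P)).det =
      ∏ i, (1 - θ / ((x - 1) * (x - θ)) * t i) := by
    simpa using det_smul_one_sub_smul_of_charpoly_eq (t := t)
      (by rwa [Fintype.card_fin, Fintype.card_fin]) 1 (θ / ((x - 1) * (x - θ)))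
  have hfactor :
      x ^ p * (x - θ) ^ p * (1 - x⁻¹) ^ p * ∏ i, (1 - θ / ((x - 1) * (x - θ)) * t i) =
        ∏ i, ((x - 1) * (x - θ) - θ * t i) := by
    rw [← mul_pow, ← mul_pow, ← Fin.prod_const, ← Finset.prod_mul_distrib]
    refine Finset.prod_congr rfl fun i _ => ?_
    have : x - 1 ≠ 0 := sub_ne_zero.2 hx1
    have : x - θ ≠ 0 := sub_ne_zero.2 hxθ
    field_simp
  simp only [Set.mem_ofPred_eq, eval_charpoly, scalar_apply, ← smul_one_eq_diagonal,
    det_smul_one_sub_add_smul_of_isIdempotentElem hP hQ hx0 hxθ hx1, hdetQ, hdetP, hdetPQP,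
    eval_mul, eval_pow, eval_X, eval_C, eval_sub, eval_one, eval_prod, ← hfactor]
  ring

end Matrix

/-- The eigenvalues `λ^±` of `P + θQ` on a two-dimensional invariant subspace on which `PQP` acts
as `t`. -/
noncomputable def twoProjEigenvalue (θ t : ℝ) (s : Bool) : ℝ :=
  (1 + θ + (if s then 1 else -1) * √((1 - θ) ^ 2 + 4 * θ * t)) / 2

section twoProjEigenvalue

variable {θ t : ℝ}

theorem twoProjEigenvalue_true_add_false :
    twoProjEigenvalue θ t true + twoProjEigenvalue θ t false = 1 + θ := by
  simp only [twoProjEigenvalue, if_true, Bool.false_eq_true, if_false]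
  ring

theorem twoProjEigenvalue_true_mul_false (hD : 0 ≤ (1 - θ) ^ 2 + 4 * θ * t) :
    twoProjEigenvalue θ t true * twoProjEigenvalue θ t false = θ * (1 - t) := by
  simp only [twoProjEigenvalue, if_true, Bool.false_eq_true, if_false]
  linear_combination (-1 / 4 : ℝ) * Real.sq_sqrt hD

theorem twoProjEigenvalue_sub_one_mul_sub (hD : 0 ≤ (1 - θ) ^ 2 + 4 * θ * t) (s : Bool) :
    (twoProjEigenvalue θ t s - 1) * (twoProjEigenvalue θ t s - θ) = θ * t := by
  have hsum := twoProjEigenvalue_true_add_false (θ := θ) (t := t)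
  have hprod := twoProjEigenvalue_true_mul_false hD
  cases s
  · linear_combination twoProjEigenvalue θ t false * hsum - hprod
  · linear_combination twoProjEigenvalue θ t true * hsum - hprod

theorem twoProjEigenvalue_true_ne_false (hD : 0 < (1 - θ) ^ 2 + 4 * θ * t) :
    twoProjEigenvalue θ t true ≠ twoProjEigenvalue θ t false := by
  have := Real.sqrt_pos.2 hD
  simp only [twoProjEigenvalue, if_true, Bool.false_eq_true, if_false]
  intro h
  linarith

theorem X_sub_C_twoProjEigenvalue_mul (hD : 0 ≤ (1 - θ) ^ 2 + 4 * θ * t) :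
    (X - C (twoProjEigenvalue θ t true : ℂ)) * (X - C (twoProjEigenvalue θ t false : ℂ)) =
      (X - 1) * (X - C (θ : ℂ)) - C ((θ : ℂ) * t) := by
  have hsum : C (twoProjEigenvalue θ t true : ℂ) + C (twoProjEigenvalue θ t false : ℂ) =
      1 + C (θ : ℂ) := by
    rw [← map_add, ← Complex.ofReal_add, twoProjEigenvalue_true_add_false]
    simp
  have hprod : C (twoProjEigenvalue θ t true : ℂ) * C (twoProjEigenvalue θ t false : ℂ) =
      C (θ : ℂ) - C (θ : ℂ) * C (t : ℂ) := by
    rw [← map_mul, ← Complex.ofReal_mul, twoProjEigenvalue_true_mul_false hD]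
    simp [mul_sub]
  rw [map_mul]
  linear_combination (-X) * hsum + hprod

theorem twoProjEigenvalue_ne_zero (hθ : θ ≠ 0) (hD : 0 ≤ (1 - θ) ^ 2 + 4 * θ * t) (ht : t ≠ 1)
    (s : Bool) : twoProjEigenvalue θ t s ≠ 0 := by
  intro h
  have := twoProjEigenvalue_sub_one_mul_sub hD s
  rw [h] at this
  exact ht (mul_left_cancel₀ hθ (by linarith)).symm

theorem twoProjEigenvalue_ne_self (hθ : θ ≠ 0) (hD : 0 ≤ (1 - θ) ^ 2 + 4 * θ * t) (ht : t ≠ 0)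
    (s : Bool) : twoProjEigenvalue θ t s ≠ θ := by
  intro h
  have := twoProjEigenvalue_sub_one_mul_sub hD s
  rw [h, sub_self, mul_zero] at this
  exact mul_ne_zero hθ ht this.symm

variable {ι : Type*} {t : ι → ℝ}

theorem twoProjEigenvalue_injective (hθ : 0 < θ) (ht : ∀ i, 0 < t i)
    (htinj : Function.Injective t) :
    Function.Injective fun z : ι × Bool => twoProjEigenvalue θ (t z.1) z.2 := by
  have hD : ∀ i, 0 < (1 - θ) ^ 2 + 4 * θ * t i := fun i => by
    have := ht i
    positivity
  rintro ⟨i, s⟩ ⟨j, s'⟩ h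
  dsimp only at h
  have hij : i = j := by
    apply htinj
    have := (twoProjEigenvalue_sub_one_mul_sub (hD i).le s).symm.trans
      (h ▸ twoProjEigenvalue_sub_one_mul_sub (hD j).le s')
    exact mul_left_cancel₀ hθ.ne' this
  subst hij
  cases s <;> cases s' <;> first
    | rfl
    | exact absurd h (twoProjEigenvalue_true_ne_false (hD i))
    | exact absurd h.symm (twoProjEigenvalue_true_ne_false (hD i))

end twoProjEigenvalue

/-- Let `P, Q` be orthogonal projection matrices in `M_N(ℂ)` with
`rank P = p`, `rank Q = q`, `p ≤ q`, `p + q ≤ N`, and let `θ > 0`.  If the characteristic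
polynomial of `PQP` is `X^(N-p) ∏ᵢ (X - tᵢ)` with `t₁, …, t_p` distinct in `(0,1)`, then
the characteristic polynomial of `P + θQ` is
`X^(N-p-q) (X - θ)^(q-p) ∏ᵢ (X - λᵢ⁺)(X - λᵢ⁻)` where
`λᵢ^± = (1 + θ ± √((1-θ)² + 4θtᵢ))/2`; the `2p` numbers `λᵢ^±` are distinct and
different from `0` and `θ`. -/
theorem charpoly_P_add_theta_Q
    (N p q : ℕ) (hpq : p ≤ q) (hpqN : p + q ≤ N)
    (P Q : Matrix (Fin N) (Fin N) ℂ)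
    (hP : P.IsHermitian) (hP2 : P * P = P) (hrankP : P.rank = p)
    (hQ : Q.IsHermitian) (hQ2 : Q * Q = Q) (hrankQ : Q.rank = q)
    (θ : ℝ) (hθ : 0 < θ)
    (t : Fin p → ℝ) (ht : ∀ i, t i ∈ Set.Ioo (0 : ℝ) 1) (htinj : Function.Injective t)
    (hchar : (P * Q * P).charpoly =
      X ^ (N - p) * ∏ i : Fin p, (X - C ((t i : ℂ))))
    (lam : Fin p → Bool → ℝ)
    (hlam : ∀ i s, lam i s =
      (1 + θ + (if s then 1 else -1) * Real.sqrt ((1 - θ) ^ 2 + 4 * θ * t i)) / 2) :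
    (P + (θ : ℂ) • Q).charpoly =
        X ^ (N - p - q) * (X - C ((θ : ℝ) : ℂ)) ^ (q - p) *
          ∏ i : Fin p, ((X - C ((lam i true : ℝ) : ℂ)) * (X - C ((lam i false : ℝ) : ℂ))) ∧
    Function.Injective (fun z : Fin p × Bool => lam z.1 z.2) ∧
    (∀ i s, lam i s ≠ 0 ∧ lam i s ≠ θ) := by
  obtain rfl : lam = fun i s => twoProjEigenvalue θ (t i) s := funext₂ hlam
  have hD : ∀ i, 0 ≤ (1 - θ) ^ 2 + 4 * θ * t i := fun i => by
    have := (ht i).1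
    positivity
  refine ⟨?_, twoProjEigenvalue_injective hθ (fun i => (ht i).1) htinj, fun i s =>
    ⟨twoProjEigenvalue_ne_zero hθ.ne' (hD i) (ht i).2.ne s,
      twoProjEigenvalue_ne_self hθ.ne' (hD i) (ht i).1.ne' s⟩⟩
  have hPchar := hP.charpoly_of_isIdempotentElem hP2
  have hQchar := hQ.charpoly_of_isIdempotentElem hQ2
  rw [Fintype.card_fin, hrankP] at hPchar
  rw [Fintype.card_fin, hrankQ] at hQchar
  simp only [charpoly_add_smul_of_isIdempotentElem hP2 hQ2 hPchar hQchar hchar hpq hpqN,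
    X_sub_C_twoProjEigenvalue_mul (hD _)]
end

section
/- Let 0 < p ≤ q with p + q ≤ 1, set a = q − p, c = q(1−p) + p(1−q), u₋ = √(q(1−p)) − √(p(1−q)) and u₊ = √(q(1−p)) + √(p(1−q)), and let I₁ = [1 + u₋, 1 + u₊] and I₂ = [1 − u₊, 1 − u₋]. Then the function ρ(x) = (1/π)·√(−a² + 2c(x−1)² − (x−1)⁴) / |x(x−1)(x−2)| satisfies ∫_{I₁∪I₂} ρ(x) dx = 2p. (ρ is the density of the absolutely continuous part of the limiting eigenvalue distribution of the sum of two independent random projections with fractional ranks p and q; its total mass is 2p, complementing the atom of mass q − p at 1 and the atom of mass 1 − p − q at 0.) -/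
/-!
Put `y = x - 1` and `b = 2 √(q(1-p)) √(p(1-q))`, so that `c² - b² = a²`,
`(1 - c)² - b² = (1 - p - q)²` and `I₁ = 1 + [√(c - b), √(c + b)]`. The density is
even in `y`, so `I₁` and `I₂ = 1 - [√(c - b), √(c + b)]` carry the same mass.
On `I₁` substitute `y² = c - b cos θ`, `θ ∈ (0, π)`: the radicand becomes `b² sin² θ` and
`ρ dx = b² sin² θ / (2π) · (1 / y² + 1 / (1 - y²)) dθ`. Both terms are instances of
`∫₀^π b² sin² θ / (m - b cos θ) dθ = π (m - √(m² - b²))`, so each interval has mass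
`((c - a) + ((1 - c) - (1 - p - q))) / 2 = p`.
-/

open MeasureTheory
open Real Set

lemma mul_cos_le_abs (b θ : ℝ) : b * cos θ ≤ |b| :=
  (le_abs_self _).trans <| by
    rw [abs_mul]; exact mul_le_of_le_one_right (abs_nonneg b) (abs_cos_le_one θ)

lemma mul_cos_lt_abs {b θ : ℝ} (hb : b ≠ 0) (hθ : θ ∈ Ioo 0 π) : b * cos θ < |b| := by
  have hsin := sin_pos_of_pos_of_lt_pi hθ.1 hθ.2
  have hsq : (b * cos θ) ^ 2 < b ^ 2 := by
    have : 0 < b ^ 2 * sin θ ^ 2 := by positivity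
    linear_combination this + b ^ 2 * sin_sq_add_cos_sq θ
  exact (le_abs_self _).trans_lt (by simpa using sq_lt_sq.1 hsq)

theorem integral_inv_sub_mul_cos {m b : ℝ} (hbm : |b| < m) :
    ∫ θ in 0..π, (m - b * cos θ)⁻¹ = π / √(m ^ 2 - b ^ 2) := by
  set r := √(m ^ 2 - b ^ 2)
  have hsq : b ^ 2 < m ^ 2 := sq_lt_sq' (abs_lt.1 hbm).1 (abs_lt.1 hbm).2
  have hr2 : r ^ 2 = m ^ 2 - b ^ 2 := sq_sqrt (by linarith)
  have hr : 0 < r := sqrt_pos.2 (by linarith)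
  have hden : ∀ θ, 0 < m - b * cos θ := fun θ => by linarith [mul_cos_le_abs b θ]
  have hden' : ∀ θ, 0 < m + r - b * cos θ := fun θ => by linarith [hden θ]
  -- A continuous form of the half-angle antiderivative
  -- `2 / r * arctan (√((m + b) / (m - b)) * tan (θ / 2))`, valid on all of `ℝ`
  -- because `m + r - b cos θ > 0`.
  have hderiv : ∀ θ, HasDerivAt
      (fun θ => (θ + 2 * arctan (b * sin θ / (m + r - b * cos θ))) / r)
      (m - b * cos θ)⁻¹ θ := by
    intro θ
    have hnum : HasDerivAt (fun θ => b * sin θ) (b * cos θ) θ := (hasDerivAt_sin θ).const_mul b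
    have hdenom : HasDerivAt (fun θ => m + r - b * cos θ) (b * sin θ) θ := by
      simpa using ((hasDerivAt_cos θ).const_mul b).const_sub (m + r)
    refine (((hasDerivAt_id' θ).add
      (((hnum.div hdenom (hden' θ).ne').arctan).const_mul 2)).div_const r).congr_deriv ?_
    have hsc := sin_sq_add_cos_sq θ
    have h1 := hden θ
    have h2 := hden' θ
    simp only [Pi.div_apply]
    field_simp
    linear_combination (-(b ^ 2) * (m + r - b * cos θ)) * hsc
      - (m + r - b * cos θ) * hr2
  have hinv : Continuous fun θ => (m - b * cos θ)⁻¹ :=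
    (by fun_prop : Continuous fun θ => m - b * cos θ).inv₀ fun θ => (hden θ).ne'
  rw [intervalIntegral.integral_eq_sub_of_hasDerivAt (fun θ _ => hderiv θ)
    (hinv.intervalIntegrable 0 π)]
  simp

lemma sq_mul_sin_sq_div_sub_mul_cos {m b θ : ℝ} (h : m - b * cos θ ≠ 0) :
    b ^ 2 * sin θ ^ 2 / (m - b * cos θ) =
      m + b * cos θ - (m ^ 2 - b ^ 2) * (m - b * cos θ)⁻¹ := by
  field_simp
  linear_combination b ^ 2 * sin_sq_add_cos_sq θ

theorem intervalIntegrable_and_integral_sin_sq_div_sub_mul_cos {m b : ℝ} (hbm : |b| ≤ m) :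
    IntervalIntegrable (fun θ => b ^ 2 * sin θ ^ 2 / (m - b * cos θ)) volume 0 π ∧
    ∫ θ in 0..π, b ^ 2 * sin θ ^ 2 / (m - b * cos θ) = π * (m - √(m ^ 2 - b ^ 2)) := by
  rcases hbm.lt_or_eq with hlt | heq
  · have hden : ∀ θ, 0 < m - b * cos θ := fun θ => by linarith [mul_cos_le_abs b θ]
    have hinv : Continuous fun θ => (m - b * cos θ)⁻¹ :=
      (by fun_prop : Continuous fun θ => m - b * cos θ).inv₀ fun θ => (hden θ).ne'
    have hsq : b ^ 2 < m ^ 2 := sq_lt_sq' (abs_lt.1 hlt).1 (abs_lt.1 hlt).2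
    have hr : 0 < √(m ^ 2 - b ^ 2) := sqrt_pos.2 (by linarith)
    simp_rw [sq_mul_sin_sq_div_sub_mul_cos (hden _).ne']
    refine ⟨(by fun_prop : Continuous _).intervalIntegrable 0 π, ?_⟩
    rw [intervalIntegral.integral_sub ((by fun_prop : Continuous _).intervalIntegrable 0 π)
        ((hinv.const_mul _).intervalIntegrable 0 π),
      intervalIntegral.integral_add intervalIntegrable_const
        ((by fun_prop : Continuous _).intervalIntegrable 0 π),
      intervalIntegral.integral_const_mul, intervalIntegral.integral_const_mul,
      integral_inv_sub_mul_cos hlt, integral_cos, intervalIntegral.integral_const]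
    simp only [sin_pi, sin_zero]
    field_simp
    linear_combination π * sq_sqrt (by linarith : 0 ≤ m ^ 2 - b ^ 2)
  · have hm : m ^ 2 - b ^ 2 = 0 := by rw [← heq, sq_abs, sub_self]
    have hEq : EqOn (fun θ => b ^ 2 * sin θ ^ 2 / (m - b * cos θ)) (fun θ => m + b * cos θ)
        (Ioo 0 π) := by
      intro θ hθ
      rcases eq_or_ne b 0 with rfl | hb
      · simp [← heq]
      have := mul_cos_lt_abs hb hθ
      simp only [sq_mul_sin_sq_div_sub_mul_cos (by linarith : m - b * cos θ ≠ 0), hm, zero_mul,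
        sub_zero]
    refine ⟨(intervalIntegrable_congr_uIoo (by rwa [uIoo_of_le pi_pos.le])).2
      ((by fun_prop : Continuous _).intervalIntegrable 0 π), ?_⟩
    rw [intervalIntegral.integral_congr_Ioo_of_le pi_pos.le hEq,
      intervalIntegral.integral_add intervalIntegrable_const
        ((by fun_prop : Continuous _).intervalIntegrable 0 π),
      intervalIntegral.integral_const_mul, integral_cos, intervalIntegral.integral_const, hm]
    simp

noncomputable def projectionSumDensity (a c x : ℝ) : ℝ :=
  1 / π * √(-a ^ 2 + 2 * c * (x - 1) ^ 2 - (x - 1) ^ 4) / |x * (x - 1) * (x - 2)|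

theorem projectionSumDensity_one_sub (a c y : ℝ) :
    projectionSumDensity a c (1 - y) = projectionSumDensity a c (1 + y) := by
  unfold projectionSumDensity
  rw [show (1 - y) * (1 - y - 1) * (1 - y - 2) = -((1 + y) * (1 + y - 1) * (1 + y - 2)) by ring,
    abs_neg]
  ring_nf

theorem integral_Icc_union_Icc_of_symmetric {f : ℝ → ℝ} {d u v : ℝ}
    (hf : ∀ y, f (d - y) = f (d + y)) (hu : 0 ≤ u)
    (hint : IntegrableOn f (Icc (d + u) (d + v))) :
    ∫ x in Icc (d + u) (d + v) ∪ Icc (d - v) (d - u), f x =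
      2 * ∫ x in Icc (d + u) (d + v), f x := by
  have hreflect : ∀ x, f (2 * d - x) = f x := fun x => by
    simpa only [show d - (x - d) = 2 * d - x by ring, add_sub_cancel] using hf (x - d)
  have hmp := Measure.measurePreserving_sub_left volume (2 * d)
  have hemb := measurableEmbedding_subLeft (2 * d)
  have hpre : (fun x => 2 * d - x) ⁻¹' Icc (d - v) (d - u) = Icc (d + u) (d + v) := by
    rw [preimage_const_sub_Icc]
    congr 1 <;> ring
  have hint' : IntegrableOn f (Icc (d - v) (d - u)) := by
    rw [← hmp.integrableOn_comp_preimage hemb, hpre]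
    simpa only [Function.comp_def, hreflect] using hint
  have hdisj : AEDisjoint volume (Icc (d + u) (d + v)) (Icc (d - v) (d - u)) :=
    ((subsingleton_Icc_of_ge (by linarith : d - u ≤ d + u)).anti
      fun x hx => ⟨hx.1.1, hx.2.2⟩).measure_zero _
  rw [setIntegral_union₀ hdisj measurableSet_Icc.nullMeasurableSet hint hint',
    ← hmp.setIntegral_preimage_emb hemb f (Icc (d - v) (d - u)), hpre]
  simp only [hreflect]
  ring

section projectionSumDensity

variable {a b c : ℝ}

theorem projectionSumDensity_one_add_sqrt {t : ℝ} (ht0 : 0 < t) (ht1 : t < 1) :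
    projectionSumDensity a c (1 + √t) =
      √(-a ^ 2 + 2 * c * t - t ^ 2) / (π * √t * (1 - t)) := by
  have hs : √t ^ 2 = t := sq_sqrt ht0.le
  have hs0 : 0 < √t := sqrt_pos.2 ht0
  have habs : |(1 + √t) * (1 + √t - 1) * (1 + √t - 2)| = √t * (1 - t) := by
    rw [show (1 + √t) * (1 + √t - 1) * (1 + √t - 2) = -(√t * (1 - t)) by
      linear_combination √t * hs, abs_neg, abs_of_pos (by nlinarith)]
  rw [projectionSumDensity, habs, add_sub_cancel_left, show √t ^ 4 = (√t ^ 2) ^ 2 by ring, hs]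
  simp only [div_eq_mul_inv, mul_inv]
  ring

theorem deriv_mul_projectionSumDensity_one_add_sqrt (hb : 0 < b) (hbc : b ≤ c)
    (hcb : c + b ≤ 1) (ha : a ^ 2 = c ^ 2 - b ^ 2) {θ : ℝ} (hθ : θ ∈ Ioo 0 π) :
    b * sin θ / (2 * √(c - b * cos θ)) * projectionSumDensity a c (1 + √(c - b * cos θ)) =
      (b ^ 2 * sin θ ^ 2 / (c - b * cos θ) + b ^ 2 * sin θ ^ 2 / (1 - c + b * cos θ)) /
        (2 * π) := by
  have hsin : 0 < sin θ := sin_pos_of_pos_of_lt_pi hθ.1 hθ.2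
  have hlo := mul_cos_lt_abs hb.ne' hθ
  have hhi := mul_cos_lt_abs (neg_ne_zero.2 hb.ne') hθ
  rw [abs_neg, abs_of_pos hb] at hhi
  rw [abs_of_pos hb] at hlo
  have ht0 : 0 < c - b * cos θ := by linarith
  have ht1 : 0 < 1 - (c - b * cos θ) := by linarith
  have hsqrt : √(-a ^ 2 + 2 * c * (c - b * cos θ) - (c - b * cos θ) ^ 2) = b * sin θ := by
    rw [← sqrt_sq (by positivity : 0 ≤ b * sin θ)]
    congr 1
    linear_combination -ha - b ^ 2 * sin_sq_add_cos_sq θ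
  rw [projectionSumDensity_one_add_sqrt ht0 (by linarith), hsqrt,
    show 1 - c + b * cos θ = 1 - (c - b * cos θ) by ring]
  have hs : √(c - b * cos θ) ^ 2 = c - b * cos θ := sq_sqrt ht0.le
  have hs0 : 0 < √(c - b * cos θ) := sqrt_pos.2 ht0
  field_simp
  rw [hs]
  ring

theorem strictMonoOn_one_add_sqrt_sub_mul_cos (hb : 0 < b) (hbc : b ≤ c) :
    StrictMonoOn (fun θ => 1 + √(c - b * cos θ)) (Icc 0 π) := fun x hx y hy hxy => by
  have hcos := mul_lt_mul_of_pos_left (cos_lt_cos_of_nonneg_of_le_pi hx.1 hy.2 hxy) hb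
  have hx := mul_cos_le_abs b x
  rw [abs_of_pos hb] at hx
  have := sqrt_lt_sqrt (by linarith : 0 ≤ c - b * cos x)
    (by linarith : c - b * cos x < c - b * cos y)
  dsimp only
  linarith

theorem integrableOn_and_integral_projectionSumDensity_Icc (hb : 0 < b) (hbc : b ≤ c)
    (hcb : c + b ≤ 1) (ha : a ^ 2 = c ^ 2 - b ^ 2) :
    IntegrableOn (projectionSumDensity a c) (Icc (1 + √(c - b)) (1 + √(c + b))) ∧
      ∫ x in Icc (1 + √(c - b)) (1 + √(c + b)), projectionSumDensity a c x =
        (1 - √(c ^ 2 - b ^ 2) - √((1 - c) ^ 2 - b ^ 2)) / 2 := by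
  set φ : ℝ → ℝ := fun θ => 1 + √(c - b * cos θ)
  have hmono : StrictMonoOn φ (Icc 0 π) := strictMonoOn_one_add_sqrt_sub_mul_cos hb hbc
  have himage : φ '' Ioo 0 π = Ioo (1 + √(c - b)) (1 + √(c + b)) := by
    simpa [φ] using (by fun_prop : Continuous φ).continuousOn.image_Ioo_of_strictMonoOn
      pi_pos.le hmono
  have hinj := hmono.injOn.mono Ioo_subset_Icc_self
  have hderiv : ∀ θ ∈ Ioo 0 π,
      HasDerivWithinAt φ (b * sin θ / (2 * √(c - b * cos θ))) (Ioo 0 π) θ := by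
    intro θ hθ
    have hpos : 0 < c - b * cos θ := by linarith [mul_cos_lt_abs hb.ne' hθ, abs_of_pos hb]
    have := ((((hasDerivAt_cos θ).const_mul b).const_sub c).sqrt hpos.ne').const_add 1
    exact (this.congr_deriv (by ring)).hasDerivWithinAt
  have hpull : EqOn
      (fun θ => |b * sin θ / (2 * √(c - b * cos θ))| • projectionSumDensity a c (φ θ))
      (fun θ => (b ^ 2 * sin θ ^ 2 / (c - b * cos θ) +
        b ^ 2 * sin θ ^ 2 / (1 - c + b * cos θ)) / (2 * π)) (Ioo 0 π) := fun θ hθ => by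
    have := sin_pos_of_pos_of_lt_pi hθ.1 hθ.2
    dsimp only
    rw [smul_eq_mul, abs_of_nonneg (by positivity)]
    exact deriv_mul_projectionSumDensity_one_add_sqrt hb hbc hcb ha hθ
  obtain ⟨hi₁, hv₁⟩ :=
    intervalIntegrable_and_integral_sin_sq_div_sub_mul_cos (abs_of_pos hb ▸ hbc)
  obtain ⟨hi₂, hv₂⟩ := intervalIntegrable_and_integral_sin_sq_div_sub_mul_cos (m := 1 - c)
    (b := -b) (by rw [abs_neg, abs_of_pos hb]; linarith)
  simp only [neg_sq, neg_mul, sub_neg_eq_add] at hi₂ hv₂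
  rw [integrableOn_Icc_iff_integrableOn_Ioo, integral_Icc_eq_integral_Ioo, ← himage,
    integrableOn_image_iff_integrableOn_abs_deriv_smul measurableSet_Ioo hderiv hinj,
    integral_image_eq_integral_abs_deriv_smul measurableSet_Ioo hderiv hinj,
    integrableOn_congr_fun hpull measurableSet_Ioo,
    setIntegral_congr_fun measurableSet_Ioo hpull,
    ← integral_Ioc_eq_integral_Ioo, ← intervalIntegral.integral_of_le pi_pos.le]
  refine ⟨((hi₁.add hi₂).div_const _).1.mono_set Ioo_subset_Ioc_self, ?_⟩
  rw [intervalIntegral.integral_div, intervalIntegral.integral_add hi₁ hi₂, hv₁, hv₂]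
  field_simp
  ring

end projectionSumDensity

theorem integrableOn_and_integral_projectionSumDensity_Icc_eq_p {p q : ℝ} (hp : 0 < p)
    (hpq : p ≤ q) (hpq1 : p + q ≤ 1) :
    IntegrableOn (projectionSumDensity (q - p) (q * (1 - p) + p * (1 - q)))
      (Icc (1 + (√(q * (1 - p)) - √(p * (1 - q))))
        (1 + (√(q * (1 - p)) + √(p * (1 - q))))) ∧
    ∫ x in Icc (1 + (√(q * (1 - p)) - √(p * (1 - q))))
        (1 + (√(q * (1 - p)) + √(p * (1 - q)))),
      projectionSumDensity (q - p) (q * (1 - p) + p * (1 - q)) x = p := by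
  set c := q * (1 - p) + p * (1 - q)
  set s := √(q * (1 - p))
  set t := √(p * (1 - q))
  have hs : s ^ 2 = q * (1 - p) := sq_sqrt (by nlinarith)
  have ht : t ^ 2 = p * (1 - q) := sq_sqrt (by nlinarith)
  have hb : 0 < 2 * s * t := by
    have : 0 < s := sqrt_pos.2 (by nlinarith)
    have : 0 < t := sqrt_pos.2 (by nlinarith)
    positivity
  have hdisc₀ : c ^ 2 - (2 * s * t) ^ 2 = (q - p) ^ 2 := by
    rw [mul_pow, mul_pow, hs, ht]; ring
  have hdisc₁ : (1 - c) ^ 2 - (2 * s * t) ^ 2 = (1 - p - q) ^ 2 := by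
    rw [mul_pow, mul_pow, hs, ht]; ring
  have hbc : 2 * s * t ≤ c :=
    (pow_le_pow_iff_left₀ hb.le (by nlinarith) two_ne_zero).1 (by nlinarith)
  have hcb : 2 * s * t ≤ 1 - c :=
    (pow_le_pow_iff_left₀ hb.le (by nlinarith) two_ne_zero).1 (by nlinarith)
  have hminus : √(c - 2 * s * t) = s - t := by
    rw [← sqrt_sq (sub_nonneg.2 (sqrt_le_sqrt (by nlinarith) : t ≤ s))]
    congr 1
    linear_combination -hs - ht
  have hplus : √(c + 2 * s * t) = s + t := by
    rw [← sqrt_sq (by positivity : 0 ≤ s + t)]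
    congr 1
    linear_combination -hs - ht
  have := integrableOn_and_integral_projectionSumDensity_Icc (a := q - p) hb hbc (by linarith)
    (by rw [hdisc₀])
  rwa [hminus, hplus, hdisc₀, hdisc₁, sqrt_sq (by linarith), sqrt_sq (by linarith),
    show (1 - (q - p) - (1 - p - q)) / 2 = p by ring] at this

/-- Let `0 < p ≤ q` with `p + q ≤ 1`, `a = q - p`,
`c = q(1-p) + p(1-q)`, `u₋ = √(q(1-p)) - √(p(1-q))`, `u₊ = √(q(1-p)) + √(p(1-q))`,
`I₁ = [1 + u₋, 1 + u₊]`, `I₂ = [1 - u₊, 1 - u₋]`.  Then the density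
`ρ(x) = (1/π) √(-a² + 2c(x-1)² - (x-1)⁴) / |x(x-1)(x-2)|` of the absolutely continuous
part of the limiting eigenvalue distribution of the sum of two independent random
projections of fractional ranks `p` and `q` has total mass `∫_{I₁ ∪ I₂} ρ = 2p`. -/
theorem density_total_mass_eq_two_p
    (p q : ℝ) (hp : 0 < p) (hpq : p ≤ q) (hpq1 : p + q ≤ 1)
    (a c uminus uplus : ℝ)
    (ha : a = q - p) (hc : c = q * (1 - p) + p * (1 - q))
    (huminus : uminus = Real.sqrt (q * (1 - p)) - Real.sqrt (p * (1 - q)))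
    (huplus : uplus = Real.sqrt (q * (1 - p)) + Real.sqrt (p * (1 - q)))
    (ρ : ℝ → ℝ)
    (hρ : ∀ x : ℝ, ρ x =
      (1 / Real.pi) * Real.sqrt (-a ^ 2 + 2 * c * (x - 1) ^ 2 - (x - 1) ^ 4) /
        |x * (x - 1) * (x - 2)|) :
    ∫ x in (Set.Icc (1 + uminus) (1 + uplus) ∪ Set.Icc (1 - uplus) (1 - uminus)), ρ x =
      2 * p := by
  obtain rfl : ρ = projectionSumDensity a c := funext hρ
  subst ha hc huminus huplus
  obtain ⟨hint, hmass⟩ := integrableOn_and_integral_projectionSumDensity_Icc_eq_p hp hpq hpq1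
  have hu : 0 ≤ √(q * (1 - p)) - √(p * (1 - q)) := sub_nonneg.2 (sqrt_le_sqrt (by nlinarith))
  rw [integral_Icc_union_Icc_of_symmetric (projectionSumDensity_one_sub _ _) hu hint, hmass]
end
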